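/- arXiv:math/0309380 — 4 statements merged into one kernel-verified Lean document; each statement's English description precedes it below -/
import Mathlib

section
/- The chromatic number of a finite undirected graph H equals the minimum over all acyclic orientations ω of H of l_ω, the number of nodes on a longest directed path under ω. -/
open SimpleGraph

open scoped Classical

noncomputable section

/-- An orientation of an undirected graph `G`: each edge receives exactly one
direction. -/
structure GraphOrientation {V : Type*} (G : SimpleGraph V) where
  dir : V → V → Prop
  dir_iff : ∀ u v, G.Adj u v ↔ (dir u v ∨ dir v u)
  not_both : ∀ u v, dir u v → ¬ dir v u

/-- An orientation is acyclic if it produces no directed cycle. -/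
def GraphOrientation.Acyclic {V : Type*} {G : SimpleGraph V}
    (ω : GraphOrientation G) : Prop :=
  ∀ v, ¬ Relation.TransGen ω.dir v v

/-- The number of nodes on a longest directed path of the relation `dir`. -/
def dirPathLen {V : Type*} (dir : V → V → Prop) : ℕ :=
  sSup {n | ∃ l : List V, l.Chain' dir ∧ l.length = n}

/-- The lexicographic product `G^k` of `G` with the complete graph on `k`
nodes: nodes `i^1, …, i^k` for each node `i` of `G`; all pairs `i^a, i^b`
(`a ≠ b`) are adjacent, and `i^a` is adjacent to `j^b` whenever `(i,j)` is an
edge of `G`. -/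
def lexProd {V : Type*} (G : SimpleGraph V) (k : ℕ) : SimpleGraph (V × Fin k) where
  Adj x y := G.Adj x.1 y.1 ∨ (x.1 = y.1 ∧ x.2 ≠ y.2)
  symm := ⟨fun x y h => by
    rcases h with h | ⟨h1, h2⟩
    · exact Or.inl h.symm
    · exact Or.inr ⟨h1.symm, h2.symm⟩⟩
  loopless := ⟨fun x h => by
    rcases h with h | ⟨h1, h2⟩
    · exact G.loopless.irrefl _ h
    · exact h2 rfl⟩

/-- A layered orientation of `G^k`: every edge between distinct layers points
from the higher layer to the lower one, and for each edge of `G` the `k`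
within-layer copies receive the same orientation. -/
def IsLayered {V : Type*} {G : SimpleGraph V} {k : ℕ}
    (φ : GraphOrientation (lexProd G k)) : Prop :=
  (∀ x y : V × Fin k, (lexProd G k).Adj x y → y.2 < x.2 → φ.dir x y) ∧
  (∀ i j : V, ∀ a b : Fin k, φ.dir (i, a) (j, a) → φ.dir (i, b) (j, b))

/-- A `k`-tuple coloring of `G`, recorded as the increasing list
`c v 0 < c v 1 < ⋯` of the `k` distinct colors of each node `v`; adjacent
nodes share no color. -/
def IsKTupleColoring {V : Type*} (G : SimpleGraph V) (k : ℕ)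
    (c : V → Fin k → ℕ) : Prop :=
  (∀ v, StrictMono (c v)) ∧ ∀ u v, G.Adj u v → ∀ a b, c u a ≠ c v b

/-- The colors of `u` and `v` strictly alternate, starting with `u`:
`c u 0 < c v 0 < c u 1 < c v 1 < ⋯ < c u (k-1) < c v (k-1)`. -/
def Alt {V : Type*} (k : ℕ) (c : V → Fin k → ℕ) (u v : V) : Prop :=
  (∀ a : Fin k, c u a < c v a) ∧
  ∀ (a : Fin k) (h : (a : ℕ) + 1 < k), c v a < c u ⟨(a : ℕ) + 1, h⟩

/-- An interleaved `k`-tuple coloring: on every edge the two `k`-tuples of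
colors strictly alternate. -/
def IsInterleavedColoring {V : Type*} (G : SimpleGraph V) (k : ℕ)
    (c : V → Fin k → ℕ) : Prop :=
  IsKTupleColoring G k c ∧ ∀ u v, G.Adj u v → Alt k c u v ∨ Alt k c v u

/-- The `k`-chromatic number `χ^k(G)`: the least number of colors in a
`k`-tuple coloring of `G`. -/
def chiK {V : Type*} (G : SimpleGraph V) (k : ℕ) : ℕ :=
  sInf {n | ∃ c : V → Fin k → ℕ, IsKTupleColoring G k c ∧ ∀ v a, c v a < n}

/-- The interleaved `k`-chromatic number `χ_int^k(G)`. -/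
def chiIntK {V : Type*} (G : SimpleGraph V) (k : ℕ) : ℕ :=
  sInf {n | ∃ c : V → Fin k → ℕ, IsInterleavedColoring G k c ∧ ∀ v a, c v a < n}

/-- The chromatic number of `G`: the least number of colors in a proper
(1-tuple) coloring. -/
def chromNat {V : Type*} (G : SimpleGraph V) : ℕ :=
  sInf {n | ∃ c : V → ℕ, (∀ u v, G.Adj u v → c u ≠ c v) ∧ ∀ v, c v < n}

/-- The multichromatic number `χ^*(G) = inf_{k ≥ 1} χ^k(G)/k`. -/
def chiStar {V : Type*} (G : SimpleGraph V) : ℝ :=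
  ⨅ k : ℕ+, (chiK G k : ℝ) / ((k : ℕ) : ℝ)

/-- The interleaved multichromatic number
`χ_int^*(G) = inf_{k ≥ 1} χ_int^k(G)/k`. -/
def chiIntStar {V : Type*} (G : SimpleGraph V) : ℝ :=
  ⨅ k : ℕ+, (chiIntK G k : ℝ) / ((k : ℕ) : ℝ)

/-- `m(κ⁺, ω)`: the number of edges of the closed walk `κ` oriented by `ω` in
the traversal direction of `κ`. -/
def mFwd {V : Type*} {G : SimpleGraph V} {v : V} (ω : GraphOrientation G)
    (κ : G.Walk v v) : ℕ :=
  (κ.darts.filter (fun d => decide (ω.dir d.toProd.1 d.toProd.2))).length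

/-- `m(κ⁻, ω)`: the number of edges of the closed walk `κ` oriented by `ω`
against the traversal direction of `κ`. -/
def mBwd {V : Type*} {G : SimpleGraph V} {v : V} (ω : GraphOrientation G)
    (κ : G.Walk v v) : ℕ :=
  (κ.darts.filter (fun d => decide (ω.dir d.toProd.2 d.toProd.1))).length

end

/-! Gallai–Hasse–Roy–Vitaver. A proper colouring with colours `0, …, n-1` orients every edge
towards its endpoint of larger colour; colours strictly increase along directed paths, so the
orientation is acyclic and its paths have at most `n` nodes. Conversely, for an acyclic
orientation, colour each node by the number of edges of a longest directed path starting there: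
an edge `u → v` extends every path from `v` to one from `u`, so the colouring is proper, and all
colours are smaller than `l_ω`. -/

lemma dirPathLen_eq_sSup {V : Type*} (r : V → V → Prop) :
    dirPathLen r = sSup {n | ∃ l : List V, l.IsChain r ∧ l.length = n} :=
  rfl

section AcyclicRelation

variable {V : Type*} {r : V → V → Prop}

lemma List.IsChain.nodup_of_acyclic (hr : ∀ v, ¬ Relation.TransGen r v v) {l : List V}
    (hl : l.IsChain r) : l.Nodup := by
  have : IsTrans V (Relation.TransGen r) := ⟨fun _ _ _ => Relation.TransGen.trans⟩
  have hpw := List.isChain_iff_pairwise.mp (hl.imp fun _ _ => Relation.TransGen.single)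
  refine hpw.imp ?_
  rintro a _ h rfl
  exact hr a h

variable [Fintype V]

lemma List.IsChain.length_le_card_of_acyclic (hr : ∀ v, ¬ Relation.TransGen r v v)
    {l : List V} (hl : l.IsChain r) : l.length ≤ Fintype.card V :=
  (hl.nodup_of_acyclic hr).length_le_card

lemma List.IsChain.length_le_dirPathLen (hr : ∀ v, ¬ Relation.TransGen r v v) {l : List V}
    (hl : l.IsChain r) : l.length ≤ dirPathLen r :=
  le_csSup ⟨Fintype.card V, by rintro _ ⟨l, hl, rfl⟩; exact hl.length_le_card_of_acyclic hr⟩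
    ⟨l, hl, rfl⟩

lemma bddAbove_isChain_cons_lengths (hr : ∀ v, ¬ Relation.TransGen r v v) (v : V) :
    BddAbove {n | ∃ l : List V, (v :: l).IsChain r ∧ l.length = n} := by
  refine ⟨Fintype.card V, ?_⟩
  rintro _ ⟨l, hl, rfl⟩
  exact (Nat.le_succ _).trans (hl.length_le_card_of_acyclic hr)

noncomputable def chainHeight (r : V → V → Prop) (v : V) : ℕ :=
  sSup {n | ∃ l : List V, (v :: l).IsChain r ∧ l.length = n}

lemma exists_isChain_length_eq_chainHeight (hr : ∀ v, ¬ Relation.TransGen r v v) (v : V) :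
    ∃ l : List V, (v :: l).IsChain r ∧ l.length = chainHeight r v :=
  Nat.sSup_mem (s := {n | ∃ l : List V, (v :: l).IsChain r ∧ l.length = n})
    ⟨0, [], List.IsChain.singleton v, rfl⟩ (bddAbove_isChain_cons_lengths hr v)

lemma chainHeight_lt_of_rel (hr : ∀ v, ¬ Relation.TransGen r v v) {u v : V} (huv : r u v) :
    chainHeight r v < chainHeight r u := by
  obtain ⟨l, hl, hlen⟩ := exists_isChain_length_eq_chainHeight hr v
  have : (v :: l).length ≤ chainHeight r u :=
    le_csSup (bddAbove_isChain_cons_lengths hr u) ⟨v :: l, hl.cons_cons huv, rfl⟩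
  simp only [List.length_cons] at this
  omega

lemma chainHeight_lt_dirPathLen (hr : ∀ v, ¬ Relation.TransGen r v v) (v : V) :
    chainHeight r v < dirPathLen r := by
  obtain ⟨l, hl, hlen⟩ := exists_isChain_length_eq_chainHeight hr v
  have := hl.length_le_dirPathLen hr
  simp only [List.length_cons] at this
  omega

end AcyclicRelation

section Potential

variable {V : Type*} {r : V → V → Prop} {c : V → ℕ}

lemma lt_of_transGen_of_rel_lt (hc : ∀ u v, r u v → c u < c v) {u v : V}
    (huv : Relation.TransGen r u v) : c u < c v := by
  induction huv with
  | single h => exact hc _ _ h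
  | tail _ h ih => exact ih.trans (hc _ _ h)

lemma dirPathLen_le_of_rel_lt (hc : ∀ u v, r u v → c u < c v) {n : ℕ} (hn : ∀ v, c v < n) :
    dirPathLen r ≤ n := by
  rw [dirPathLen_eq_sSup]
  refine csSup_le ⟨0, [], List.isChain_nil, rfl⟩ ?_
  rintro _ ⟨l, hl, rfl⟩
  have hsorted : (l.map c).Pairwise (· < ·) :=
    List.isChain_iff_pairwise.mp ((List.isChain_map c).mpr (hl.imp hc))
  calc l.length = (l.map c).toFinset.card := by
        rw [List.toFinset_card_of_nodup hsorted.nodup, List.length_map]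
    _ ≤ (Finset.range n).card :=
        Finset.card_le_card fun x hx => by
          obtain ⟨v, -, rfl⟩ := List.mem_map.mp (List.mem_toFinset.mp hx)
          exact Finset.mem_range.mpr (hn v)
    _ = n := Finset.card_range n

end Potential

section Orientation

variable {V : Type*} {H : SimpleGraph V}

def GraphOrientation.ofColoring (c : V → ℕ) (hc : ∀ u v, H.Adj u v → c u ≠ c v) :
    GraphOrientation H where
  dir u v := H.Adj u v ∧ c u < c v
  dir_iff u v := by
    refine ⟨fun h => (hc u v h).lt_or_gt.imp (⟨h, ·⟩) (⟨h.symm, ·⟩), ?_⟩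
    rintro (⟨h, -⟩ | ⟨h, -⟩)
    exacts [h, h.symm]
  not_both _ _ h h' := h.2.asymm h'.2

lemma GraphOrientation.acyclic_ofColoring (c : V → ℕ) (hc : ∀ u v, H.Adj u v → c u ≠ c v) :
    (GraphOrientation.ofColoring c hc).Acyclic := fun _ hv =>
  (lt_of_transGen_of_rel_lt (fun _ _ h => h.2) hv).false

lemma GraphOrientation.dirPathLen_ofColoring_le (c : V → ℕ)
    (hc : ∀ u v, H.Adj u v → c u ≠ c v) {n : ℕ} (hn : ∀ v, c v < n) :
    dirPathLen (GraphOrientation.ofColoring c hc).dir ≤ n :=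
  dirPathLen_le_of_rel_lt (fun _ _ h => h.2) hn

lemma GraphOrientation.exists_coloring_lt_dirPathLen [Fintype V] (ω : GraphOrientation H)
    (hω : ω.Acyclic) :
    ∃ c : V → ℕ, (∀ u v, H.Adj u v → c u ≠ c v) ∧ ∀ v, c v < dirPathLen ω.dir := by
  refine ⟨chainHeight ω.dir, fun u v huv => ?_, chainHeight_lt_dirPathLen hω⟩
  rcases (ω.dir_iff u v).mp huv with h | h
  exacts [(chainHeight_lt_of_rel hω h).ne', (chainHeight_lt_of_rel hω h).ne]

end Orientation

/-- The chromatic number of a finite undirected graph `H` equals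
the minimum over all acyclic orientations `ω` of `H` of `l_ω`, the number of
nodes on a longest directed path under `ω`. -/
theorem stmt4 {V : Type*} [Fintype V] (H : SimpleGraph V) :
    chromNat H =
      sInf {n | ∃ ω : GraphOrientation H, ω.Acyclic ∧ n = dirPathLen ω.dir} := by
  have hcolorings : {n | ∃ c : V → ℕ, (∀ u v, H.Adj u v → c u ≠ c v) ∧ ∀ v, c v < n}.Nonempty :=
    ⟨Fintype.card V, fun v => Fintype.equivFin V v,
      fun _ _ huv h => huv.ne ((Fintype.equivFin V).injective (Fin.ext h)),
      fun v => (Fintype.equivFin V v).isLt⟩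
  obtain ⟨c, hc, hcχ⟩ : ∃ c : V → ℕ, (∀ u v, H.Adj u v → c u ≠ c v) ∧ ∀ v, c v < chromNat H :=
    Nat.sInf_mem hcolorings
  set ω := GraphOrientation.ofColoring c hc
  have hω : ω.Acyclic := GraphOrientation.acyclic_ofColoring c hc
  apply le_antisymm
  · refine le_csInf ⟨_, ω, hω, rfl⟩ ?_
    rintro _ ⟨ω', hω', rfl⟩
    exact Nat.sInf_le (ω'.exists_coloring_lt_dirPathLen hω')
  · calc sInf _ ≤ dirPathLen ω.dir := Nat.sInf_le (Set.mem_ofPred.mpr ⟨ω, hω, rfl⟩)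
      _ ≤ chromNat H := GraphOrientation.dirPathLen_ofColoring_le c hc hcχ
end

section
/- Let φ be a layered acyclic orientation of G^k and let p be a longest directed path under φ. If p contains an edge directed from i^{k1} to j^{k2} with k1 ≥ k2, then either k1 = k2 and for every ℓ = 1,...,k the edge between i^ℓ and j^ℓ is directed from i^ℓ to j^ℓ, or k1 = k2 + 1, i ≠ j, and for every ℓ = 1,...,k the edge between i^ℓ and j^ℓ is directed from j^ℓ to i^ℓ. -/
open SimpleGraph

open scoped Classical

/-!
An edge `(i, a) → (j, b)` of a longest directed path admits no `z` with
`(i, a) → z → (j, b)`: inserting `z` would lengthen the path. When `b < a` all edges from layer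
`a` down to layer `b` point downwards, so such a `z` exists if `b + 1 < a` (take `z = (j, b + 1)`),
if `i → j` within the layers (take `z = (j, a)`), and if `i = j` has a neighbour `m` in `G`
(take `z = (m, a)` or `z = (m, b)`). If `i = j` is isolated, the path stays in the clique
`{i} × Fin k`, where it descends through the layers, so it has at most `k` nodes; but an edge
`u → v` of `G` yields the longer path `(u, k-1), (v, k-1), …, (v, 0)`.
-/

namespace List

variable {α : Type*} {r : α → α → Prop}

theorem exists_eq_append_cons_cons_of_mem_zip_tail {l : List α} {x y : α}
    (h : (x, y) ∈ l.zip l.tail) : ∃ l₁ l₂, l = l₁ ++ x :: y :: l₂ := by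
  induction l using twoStepInduction with
  | nil | singleton => simp at h
  | cons_cons z w l _ ih =>
    simp only [tail_cons, zip_cons_cons, mem_cons, Prod.mk.injEq] at h
    rcases h with ⟨rfl, rfl⟩ | h
    · exact ⟨[], l, rfl⟩
    · obtain ⟨l₁, l₂, he⟩ := ih w h
      exact ⟨z :: l₁, l₂, by rw [he, cons_append]⟩

theorem IsChain.rel_of_mem_zip_tail {l : List α} (hl : l.IsChain r) {x y : α}
    (hxy : (x, y) ∈ l.zip l.tail) : r x y := by
  obtain ⟨l₁, l₂, rfl⟩ := exists_eq_append_cons_cons_of_mem_zip_tail hxy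
  exact (isChain_append_cons_cons.1 hl).2.1

theorem IsChain.not_exists_rel_rel_of_forall_length_le {l : List α} (hl : l.IsChain r)
    (hmax : ∀ q : List α, q.IsChain r → q.length ≤ l.length) {x y : α}
    (hxy : (x, y) ∈ l.zip l.tail) : ¬ ∃ z, r x z ∧ r z y := by
  rintro ⟨z, hxz, hzy⟩
  obtain ⟨l₁, l₂, rfl⟩ := exists_eq_append_cons_cons_of_mem_zip_tail hxy
  obtain ⟨h₁, -, h₂⟩ := isChain_append_cons_cons.1 hl
  have := hmax (l₁ ++ x :: z :: y :: l₂) <| isChain_append_cons_cons.2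
    ⟨h₁, hxz, isChain_cons_cons.2 ⟨hzy, h₂⟩⟩
  simp at this

theorem IsChain.iff_of_mem_of_mem {P : α → Prop} (hP : ∀ x y, r x y → (P x ↔ P y))
    {l : List α} (hl : l.IsChain r) {x y : α} (hx : x ∈ l) (hy : y ∈ l) : P x ↔ P y := by
  cases l with
  | nil => simp at hx
  | cons z l =>
    have hz := hl.induction (fun w => P w ↔ P z) _ (fun u v huv h => (hP u v huv).symm.trans h)
      (fun _ => Iff.rfl)
    exact (hz x hx).trans (hz y hy).symm

end List

namespace IsLayered

variable {V : Type*} {G : SimpleGraph V} {k : ℕ} {φ : GraphOrientation (lexProd G k)}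

theorem snd_lt_of_dir_of_fst_eq (hl : IsLayered φ) {x y : V × Fin k} (hxy : φ.dir x y)
    (he : x.1 = y.1) : y.2 < x.2 := by
  have hadj := (φ.dir_iff x y).2 (Or.inl hxy)
  rcases lt_or_gt_of_ne (fun h : x.2 = y.2 => hadj.ne (Prod.ext he h)) with h | h
  · exact absurd (hl.1 y x hadj.symm h) (φ.not_both x y hxy)
  · exact h

theorem exists_between_of_succ_lt (hl : IsLayered φ) {i j : V} {a b : Fin k}
    (hadj : (lexProd G k).Adj (i, a) (j, b)) (hab : (b : ℕ) + 1 < a) :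
    ∃ z, φ.dir (i, a) z ∧ φ.dir z (j, b) := by
  let c : Fin k := ⟨b + 1, hab.trans a.isLt⟩
  have hca : c < a := hab
  have hbc : b < c := Fin.lt_def.2 (Nat.lt_succ_self b)
  refine ⟨(j, c), hl.1 _ _ ?_ hca, hl.1 _ _ (Or.inr ⟨rfl, hbc.ne'⟩) hbc⟩
  exact hadj.imp id fun h => ⟨h.1, hca.ne'⟩

theorem exists_between_of_adj (hl : IsLayered φ) {i m : V} (him : G.Adj i m) {a b : Fin k}
    (hba : b < a) : ∃ z, φ.dir (i, a) z ∧ φ.dir z (i, b) := by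
  rcases (φ.dir_iff (i, a) (m, a)).1 (Or.inl him) with h | h
  · exact ⟨(m, a), h, hl.1 _ _ (Or.inl him.symm) hba⟩
  · exact ⟨(m, b), hl.1 _ _ (Or.inl him) hba, hl.2 m i a b h⟩

theorem exists_between_of_dir (hl : IsLayered φ) {i j : V} {a b : Fin k}
    (hba : b < a) (h : φ.dir (i, b) (j, b)) : ∃ z, φ.dir (i, a) z ∧ φ.dir z (j, b) :=
  ⟨(j, a), hl.2 i j b a h, hl.1 _ _ (Or.inr ⟨rfl, hba.ne'⟩) hba⟩

theorem length_le_of_forall_not_adj (hl : IsLayered φ) {i : V} (hi : ∀ m, ¬ G.Adj i m)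
    {q : List (V × Fin k)} (hq : q.IsChain φ.dir) {a : Fin k} (ha : (i, a) ∈ q) :
    q.length ≤ k := by
  have hstep : ∀ x y, φ.dir x y → (x.1 = i ↔ y.1 = i) := fun x y hxy => by
    rcases (φ.dir_iff x y).2 (Or.inl hxy) with h | ⟨h, -⟩
    · exact iff_of_false (fun hx => hi _ (hx ▸ h)) (fun hy => hi _ (hy ▸ h.symm))
    · rw [h]
  have hcol : ∀ x ∈ q, x.1 = i := fun x hx => (hq.iff_of_mem_of_mem hstep hx ha).2 rfl
  have hdec : (q.map Prod.snd).IsChain (· > ·) :=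
    (List.isChain_map _).2 <| hq.imp_of_mem_imp fun x y hx hy hxy =>
      hl.snd_lt_of_dir_of_fst_eq hxy ((hcol x hx).trans (hcol y hy).symm)
  simpa using hdec.sortedGT.nodup.length_le_card

theorem isChain_map_of_sortedGT (hl : IsLayered φ) (v : V) {l : List (Fin k)}
    (h : l.SortedGT) : (l.map (v, ·)).IsChain φ.dir :=
  (List.isChain_map _).2 <| h.isChain.imp fun _ _ hab => hl.1 _ _ (Or.inr ⟨rfl, hab.ne'⟩) hab

theorem exists_isChain_length_eq_succ (hl : IsLayered φ) (hE : G.edgeSet.Nonempty)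
    (a : Fin k) : ∃ q : List (V × Fin k), q.IsChain φ.dir ∧ q.length = k + 1 := by
  obtain ⟨n, rfl⟩ := Nat.exists_eq_add_one.2 a.pos
  obtain ⟨u, v, huv⟩ : ∃ u v, φ.dir (u, Fin.last n) (v, Fin.last n) := by
    obtain ⟨e, he⟩ := hE
    induction e using Sym2.ind with
    | _ u v =>
      exact ((φ.dir_iff _ _).1 (Or.inl (G.mem_edgeSet.1 he))).elim (⟨u, v, ·⟩)
        (⟨v, u, ·⟩)
  have hcol := hl.isChain_map_of_sortedGT v (List.sortedGT_ofFn_iff.2 Fin.rev_strictAnti)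
  refine ⟨(u, Fin.last n) :: (List.ofFn Fin.rev).map (v, ·), ?_, by simp⟩
  rw [List.ofFn_succ, Fin.rev_zero] at hcol ⊢
  exact hcol.cons (by simpa using huv)

end IsLayered

theorem stmt8_general {V : Type*} (G : SimpleGraph V)
    (hE : G.edgeSet.Nonempty) (k : ℕ)
    (φ : GraphOrientation (lexProd G k)) (hl : IsLayered φ)
    (p : List (V × Fin k)) (hchain : p.Chain' φ.dir)
    (hmax : ∀ q : List (V × Fin k), q.Chain' φ.dir → q.length ≤ p.length)
    (i j : V) (a b : Fin k) (hmem : ((i, a), (j, b)) ∈ p.zip p.tail)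
    (hba : (b : ℕ) ≤ (a : ℕ)) :
    (a = b ∧ ∀ ℓ : Fin k, φ.dir (i, ℓ) (j, ℓ)) ∨
    ((a : ℕ) = (b : ℕ) + 1 ∧ i ≠ j ∧ ∀ ℓ : Fin k, φ.dir (j, ℓ) (i, ℓ)) := by
  have hdir : φ.dir (i, a) (j, b) := hchain.rel_of_mem_zip_tail hmem
  have hnot_between := hchain.not_exists_rel_rel_of_forall_length_le hmax hmem
  obtain rfl | hlt := (Fin.le_iff_val_le_val.2 hba).eq_or_lt
  · exact Or.inl ⟨rfl, fun ℓ => hl.2 i j _ ℓ hdir⟩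
  have hadj : (lexProd G k).Adj (i, a) (j, b) := (φ.dir_iff _ _).2 (Or.inl hdir)
  have hsucc : (a : ℕ) = b + 1 := by
    by_contra h
    exact hnot_between (hl.exists_between_of_succ_lt hadj (by omega))
  have hij : i ≠ j := by
    rintro rfl
    by_cases hi : ∃ m, G.Adj i m
    · obtain ⟨m, him⟩ := hi
      exact hnot_between (hl.exists_between_of_adj him hlt)
    · obtain ⟨q, hq, hlen⟩ := hl.exists_isChain_length_eq_succ hE a
      have hp := hl.length_le_of_forall_not_adj (not_exists.1 hi) hchain (List.of_mem_zip hmem).1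
      have hq_le := hmax q hq
      omega
  have hGij : G.Adj i j := hadj.resolve_right fun h => hij h.1
  refine Or.inr ⟨hsucc, hij, fun ℓ => hl.2 j i b ℓ ?_⟩
  exact ((φ.dir_iff (i, b) (j, b)).1 (Or.inl hGij)).resolve_left fun h =>
    hnot_between (hl.exists_between_of_dir hlt h)

/-- Lemma 3: Let `φ` be a layered acyclic orientation of `G^k`
and `p` a longest directed path under `φ`. If `p` contains an edge directed
from `(i, a)` to `(j, b)` with `a ≥ b` (layers `k₁ ≥ k₂`), then either
`a = b` and for every layer `ℓ` the edge between `(i, ℓ)` and `(j, ℓ)` is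
directed from `(i, ℓ)` to `(j, ℓ)`, or `a = b + 1`, `i ≠ j`, and for every
layer `ℓ` that edge is directed from `(j, ℓ)` to `(i, ℓ)`. -/
theorem stmt8 {V : Type*} [Fintype V] (G : SimpleGraph V)
    (hE : G.edgeSet.Nonempty) (k : ℕ) (hk : 1 ≤ k)
    (φ : GraphOrientation (lexProd G k)) (hl : IsLayered φ) (hac : φ.Acyclic)
    (p : List (V × Fin k)) (hchain : p.Chain' φ.dir)
    (hmax : ∀ q : List (V × Fin k), q.Chain' φ.dir → q.length ≤ p.length)
    (i j : V) (a b : Fin k) (hmem : ((i, a), (j, b)) ∈ p.zip p.tail)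
    (hba : (b : ℕ) ≤ (a : ℕ)) :
    (a = b ∧ ∀ ℓ : Fin k, φ.dir (i, ℓ) (j, ℓ)) ∨
    ((a : ℕ) = (b : ℕ) + 1 ∧ i ≠ j ∧ ∀ ℓ : Fin k, φ.dir (j, ℓ) (i, ℓ)) :=
  stmt8_general G hE k φ hl p hchain hmax i j a b hmem hba
end

section
/- If G is a forest with at least one edge, then the interleaved multichromatic number of G equals 2. -/
open SimpleGraph

open scoped Classical

/-!
A proper 2-colouring `C` of a forest gives the interleaved `k`-tuple colouring
`v ↦ (2a + C v)_{a < k}` with `2k` colours. Conversely, along an edge the alternation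
`c u 0 < c v 0 < c u 1 < ⋯ < c v (k-1)` forces `2k` distinct colours. So `χ_int^k(G) = 2k`
for every `k ≥ 1`.
-/

section InterleavedChromatic

variable {V : Type*} {G : SimpleGraph V}

def interleaveColoring (C : G.Coloring (Fin 2)) (k : ℕ) : V → Fin k → ℕ :=
  fun v a => 2 * a + C v

lemma interleaveColoring_lt (C : G.Coloring (Fin 2)) {k : ℕ} (v : V) (a : Fin k) :
    interleaveColoring C k v a < 2 * k := by
  have := (C v).isLt
  have := a.isLt
  simp only [interleaveColoring]
  omega

lemma alt_interleaveColoring (C : G.Coloring (Fin 2)) (k : ℕ) {u v : V}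
    (h : (C u : ℕ) < C v) : Alt k (interleaveColoring C k) u v := by
  have := (C v).isLt
  refine ⟨fun a => ?_, fun a _ => ?_⟩ <;> simp only [interleaveColoring] <;> omega

lemma isInterleavedColoring_interleaveColoring (C : G.Coloring (Fin 2)) (k : ℕ) :
    IsInterleavedColoring G k (interleaveColoring C k) := by
  refine ⟨⟨fun v a b hab => ?_, fun u v huv a b => ?_⟩, fun u v huv => ?_⟩
  · simp only [interleaveColoring]
    have : (a : ℕ) < b := hab
    omega
  · have hne : (C u : ℕ) ≠ C v := Fin.val_ne_of_ne (C.valid huv)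
    have := (C u).isLt
    have := (C v).isLt
    simp only [interleaveColoring]
    omega
  · rcases Nat.lt_or_gt_of_ne (Fin.val_ne_of_ne (C.valid huv)) with h | h
    · exact Or.inl (alt_interleaveColoring C k h)
    · exact Or.inr (alt_interleaveColoring C k h)

section LowerBound

variable {k : ℕ} {c : V → Fin k → ℕ} {u v : V}

lemma Alt.two_mul_add_one_le (h : Alt k c u v) (a : Fin k) : 2 * (a : ℕ) + 1 ≤ c v a := by
  obtain ⟨m, hm⟩ := a
  induction m with
  | zero => exact Nat.one_le_of_lt (h.1 ⟨0, hm⟩)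
  | succ m ih =>
    have hprev := ih (by omega)
    have hstep : c v ⟨m, by omega⟩ < c u ⟨m + 1, hm⟩ := h.2 ⟨m, by omega⟩ hm
    have hsame := h.1 ⟨m + 1, hm⟩
    simp only at hprev ⊢
    omega

lemma Alt.two_mul_le (h : Alt k c u v) {n : ℕ} (hn : ∀ a, c v a < n) : 2 * k ≤ n := by
  rcases Nat.eq_zero_or_pos k with rfl | hk
  · exact Nat.zero_le n
  · have hlast := (h.two_mul_add_one_le ⟨k - 1, by omega⟩).trans_lt (hn ⟨k - 1, by omega⟩)
    simp only at hlast
    omega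

lemma IsInterleavedColoring.two_mul_le (hc : IsInterleavedColoring G k c) (huv : G.Adj u v)
    {n : ℕ} (hn : ∀ w a, c w a < n) : 2 * k ≤ n := by
  rcases hc.2 u v huv with h | h
  · exact h.two_mul_le (hn v)
  · exact h.two_mul_le (hn u)

end LowerBound

lemma chiIntK_eq_two_mul (h2 : G.Colorable 2) {u v : V} (huv : G.Adj u v) (k : ℕ) :
    chiIntK G k = 2 * k := by
  obtain ⟨C⟩ := h2
  have hmem : 2 * k ∈ {n | ∃ c : V → Fin k → ℕ, IsInterleavedColoring G k c ∧ ∀ v a, c v a < n} :=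
    ⟨interleaveColoring C k, isInterleavedColoring_interleaveColoring C k, interleaveColoring_lt C⟩
  refine le_antisymm (Nat.sInf_le hmem) (le_csInf ⟨_, hmem⟩ ?_)
  rintro n ⟨c, hc, hn⟩
  exact hc.two_mul_le huv hn

lemma chiIntStar_eq_two (h2 : G.Colorable 2) {u v : V} (huv : G.Adj u v) :
    chiIntStar G = 2 := by
  have hratio : ∀ k : ℕ+, (chiIntK G k : ℝ) / ((k : ℕ) : ℝ) = 2 := fun k => by
    rw [chiIntK_eq_two_mul h2 huv, Nat.cast_mul, Nat.cast_ofNat,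
      mul_div_cancel_right₀ _ (Nat.cast_ne_zero.mpr k.ne_zero)]
  rw [chiIntStar, iInf_congr hratio, ciInf_const]

end InterleavedChromatic

theorem stmt10_general {V : Type*} (G : SimpleGraph V)
    (hE : G.edgeSet.Nonempty) (hforest : G.IsAcyclic) :
    chiIntStar G = 2 := by
  obtain ⟨⟨u, v⟩, huv⟩ := hE
  exact chiIntStar_eq_two hforest.colorable_two huv

/-- If `G` is a forest with at least one edge, then the
interleaved multichromatic number of `G` equals 2. -/
theorem stmt10 {V : Type*} [Fintype V] (G : SimpleGraph V)
    (hE : G.edgeSet.Nonempty) (hforest : G.IsAcyclic) :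
    chiIntStar G = 2 :=
  stmt10_general G hE hforest
end

section
/- For the odd cycle C_{2r+1} (r ≥ 1), the interleaved multichromatic number equals (2r+1)/r. -/
open SimpleGraph

open scoped Classical

/-!
Each colour class of a `k`-tuple colouring is an independent set, and an independent set of
`C_{2r+1}` has at most `r` nodes because it is disjoint from its rotation by one step; counting
the `(2r+1)k` (node, colour) pairs by colour gives `(2r+1)k ≤ r · χ_int^k`. Conversely, giving
node `i` the colours `i, i + 2, …, i + 2(r - 1)` modulo `2r + 1` makes the colour tuples of
neighbouring nodes alternate, so `χ_int^r ≤ 2r + 1`.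
-/

open Finset

section Interleaved

variable {V : Type*} {k : ℕ} {c : V → Fin k → ℕ}

theorem Alt.ne {u v : V} (hu : StrictMono (c u)) (h : Alt k c u v) (a b : Fin k) :
    c u a ≠ c v b := by
  rcases le_or_gt a b with hab | hba
  · exact (lt_of_le_of_lt (hu.monotone hab) (h.1 b)).ne
  · have hb : (b : ℕ) + 1 < k := lt_of_le_of_lt hba a.isLt
    have hle : c u ⟨(b : ℕ) + 1, hb⟩ ≤ c u a := hu.monotone (Fin.le_def.2 hba)
    exact (lt_of_lt_of_le (h.2 b hb) hle).ne'

theorem isInterleavedColoring_of_alt {G : SimpleGraph V} (hmono : ∀ v, StrictMono (c v))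
    (halt : ∀ u v, G.Adj u v → Alt k c u v ∨ Alt k c v u) : IsInterleavedColoring G k c := by
  refine ⟨⟨hmono, fun u v huv a b => ?_⟩, halt⟩
  rcases halt u v huv with h | h
  · exact h.ne (hmono u) a b
  · exact (h.ne (hmono v) b a).symm

theorem IsKTupleColoring.card_mul_le_indepNum_mul [Fintype V] {G : SimpleGraph V} {n : ℕ}
    (hc : IsKTupleColoring G k c) (hn : ∀ v a, c v a < n) :
    Fintype.card V * k ≤ G.indepNum * n := by
  have hfiber : ∀ t ∈ range n, #{p : V × Fin k | c p.1 p.2 = t} ≤ G.indepNum := by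
    intro t _
    set F : Finset (V × Fin k) := {p | c p.1 p.2 = t}
    have hinj : Set.InjOn Prod.fst (F : Set (V × Fin k)) := by
      intro p hp q hq hpq
      simp only [F, coe_filter, mem_univ, true_and, Set.mem_ofPred_eq] at hp hq
      exact Prod.ext hpq ((hc.1 p.1).injective (by rw [hp, hpq, hq]))
    have hindep : G.IsIndepSet (F.image Prod.fst : Set V) := by
      intro u hu v hv _ huv
      obtain ⟨p, hp, rfl⟩ := mem_image.1 hu
      obtain ⟨q, hq, rfl⟩ := mem_image.1 hv
      simp only [F, mem_filter, mem_univ, true_and] at hp hq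
      exact hc.2 _ _ huv p.2 q.2 (hp.trans hq.symm)
    rw [← card_image_of_injOn hinj]
    exact hindep.card_le_indepNum
  simpa using card_le_mul_card_image_of_maps_to (s := univ)
    (fun p _ => mem_range.2 (hn p.1 p.2)) _ hfiber

end Interleaved

section FinGraph

variable {N : ℕ} (G : SimpleGraph (Fin N)) (k : ℕ)

theorem exists_isInterleavedColoring_lt_mul :
    ∃ c : Fin N → Fin k → ℕ, IsInterleavedColoring G k c ∧ ∀ v a, c v a < N * k := by
  have halt : ∀ u v : Fin N, u < v → Alt k (fun v a => a * N + v) u v := by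
    intro u v huv
    refine ⟨fun a => by simp only; omega, fun a _ => ?_⟩
    simp only [add_mul, one_mul]
    omega
  refine ⟨fun v a => a * N + v, isInterleavedColoring_of_alt (fun v a b hab => ?_) ?_, ?_⟩
  · simp only [add_lt_add_iff_right]
    exact Nat.mul_lt_mul_of_pos_right hab v.pos
  · intro u v huv
    rcases lt_or_gt_of_ne huv.ne with h | h
    · exact .inl (halt u v h)
    · exact .inr (halt v u h)
  · intro v a
    calc a * N + v < (a + 1) * N := by rw [add_one_mul]; omega
      _ ≤ k * N := Nat.mul_le_mul_right N a.isLt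
      _ = N * k := mul_comm k N

theorem le_indepNum_mul_chiIntK : N * k ≤ G.indepNum * chiIntK G k := by
  obtain ⟨c, hc, hcn⟩ : ∃ c, IsInterleavedColoring G k c ∧ ∀ v a, c v a < chiIntK G k :=
    Nat.sInf_mem (s := {n | ∃ c, IsInterleavedColoring G k c ∧ ∀ v a, c v a < n})
      ⟨_, exists_isInterleavedColoring_lt_mul G k⟩
  simpa using hc.1.card_mul_le_indepNum_mul hcn

end FinGraph

theorem cycleGraph_adj_val {n : ℕ} {u v : Fin n} (h : (cycleGraph n).Adj u v) :
    u.val + 1 = v.val ∨ v.val + 1 = u.val ∨ u.val + n = v.val + 1 ∨ v.val + n = u.val + 1 := by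
  have hsub : ∀ x y : Fin n, (x - y).val = 1 → y.val + 1 = x.val ∨ x.val + n = y.val + 1 := by
    intro x y hxy
    rcases le_or_gt y x with hle | hlt
    · rw [Fin.coe_sub_iff_le.2 hle] at hxy
      omega
    · rw [Fin.coe_sub_iff_lt.2 hlt] at hxy
      omega
  rcases cycleGraph_adj'.1 h with h | h
  · rcases hsub u v h with h | h <;> omega
  · rcases hsub v u h with h | h <;> omega

theorem two_mul_indepNum_cycleGraph_le {n : ℕ} [NeZero n] (hn : 1 < n) :
    2 * (cycleGraph n).indepNum ≤ n := by
  obtain ⟨s, hs⟩ := (cycleGraph n).exists_isNIndepSet_indepNum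
  have hdisj : Disjoint s (s.image (· + 1)) := by
    refine disjoint_left.2 fun x hx hx' => ?_
    obtain ⟨y, hy, rfl⟩ := mem_image.1 hx'
    refine hs.isIndepSet hx hy (by simpa using hn.ne') (cycleGraph_adj'.2 (.inl ?_))
    rw [add_sub_cancel_left, Fin.val_one', Nat.mod_eq_of_lt hn]
  have := card_le_univ (s ∪ s.image (· + 1))
  rw [card_union_of_disjoint hdisj, card_image_of_injective s (add_left_injective 1),
    hs.card_eq, Fintype.card_fin] at this
  omega

/-- Node `i` of `C_{2r+1}` gets the colours `i, i + 2, …, i + 2(r - 1)` modulo `2r + 1`;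
`oddCycleColor i a` is the `a`-th smallest of them (for `a < r` this does not depend on `r`). -/
def oddCycleColor (i a : ℕ) : ℕ :=
  if i = 0 then 2 * a
  else if i % 2 = 1 then (if 2 * a + 1 < i then 2 * a else 2 * a + 1)
  else if 2 * a + 2 < i then 2 * a + 1 else 2 * a + 2

theorem oddCycleColor_strictMono (i : ℕ) : StrictMono (oddCycleColor i) := by
  intro a b hab
  unfold oddCycleColor
  split_ifs <;> omega

theorem oddCycleColor_lt {r : ℕ} (i : ℕ) {a : ℕ} (ha : a < r) :
    oddCycleColor i a < 2 * r + 1 := by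
  unfold oddCycleColor
  split_ifs <;> omega

def oddCycleColoring (r : ℕ) : Fin (2 * r + 1) → Fin r → ℕ := fun v a => oddCycleColor v a

/-- On an edge `ij` of `C_{2r+1}`, node `i` holds the smallest colour of `oddCycleColoring r`. -/
def LeadsOnOddCycle (r i j : ℕ) : Prop :=
  i + 1 = j ∧ (i = 0 ∨ i % 2 = 1) ∨ j + 1 = i ∧ j ≠ 0 ∧ j % 2 = 0 ∨ i = 0 ∧ j = 2 * r

theorem alt_oddCycleColoring {r : ℕ} {u v : Fin (2 * r + 1)} (h : LeadsOnOddCycle r u v) :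
    Alt r (oddCycleColoring r) u v := by
  have hu := u.isLt
  have hv := v.isLt
  unfold LeadsOnOddCycle at h
  refine ⟨fun a => ?_, fun a ha => ?_⟩ <;>
  · have := a.isLt
    simp only [oddCycleColoring, oddCycleColor]
    split_ifs <;> omega

theorem isInterleavedColoring_oddCycleColoring (r : ℕ) :
    IsInterleavedColoring (cycleGraph (2 * r + 1)) r (oddCycleColoring r) := by
  refine isInterleavedColoring_of_alt
    (fun v => (oddCycleColor_strictMono v).comp Fin.val_strictMono) fun u v huv => ?_
  by_cases h : LeadsOnOddCycle r u v
  · exact .inl (alt_oddCycleColoring h)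
  · have hadj := cycleGraph_adj_val huv
    have hu := u.isLt
    have hv := v.isLt
    unfold LeadsOnOddCycle at h
    exact .inr (alt_oddCycleColoring (by unfold LeadsOnOddCycle; omega))

theorem chiIntK_cycleGraph_le (r : ℕ) : chiIntK (cycleGraph (2 * r + 1)) r ≤ 2 * r + 1 :=
  Nat.sInf_le ⟨oddCycleColoring r, isInterleavedColoring_oddCycleColoring r,
    fun v a => oddCycleColor_lt v a.isLt⟩

/-- For the odd cycle `C_{2r+1}` (`r ≥ 1`), the interleaved
multichromatic number equals `(2r+1)/r`. -/
theorem stmt18 (r : ℕ) (hr : 1 ≤ r) :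
    chiIntStar (SimpleGraph.cycleGraph (2 * r + 1)) = (2 * r + 1 : ℝ) / (r : ℝ) := by
  set G := cycleGraph (2 * r + 1)
  have hr0 : (0 : ℝ) < r := by exact_mod_cast hr
  have hlower : ∀ k : ℕ+, (2 * r + 1 : ℝ) / r ≤ chiIntK G k / (k : ℕ) := by
    intro k
    have hα : 2 * G.indepNum ≤ 2 * r + 1 := two_mul_indepNum_cycleGraph_le (by omega)
    have hk : (2 * r + 1) * (k : ℕ) ≤ r * chiIntK G k :=
      (le_indepNum_mul_chiIntK G k).trans (Nat.mul_le_mul_right _ (by omega))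
    rw [div_le_div_iff₀ hr0 (by positivity)]
    exact_mod_cast hk.trans_eq (mul_comm _ _)
  have hupper : (chiIntK G r : ℝ) / r ≤ (2 * r + 1 : ℝ) / r := by
    gcongr
    exact_mod_cast chiIntK_cycleGraph_le r
  exact IsLeast.csInf_eq ⟨⟨⟨r, hr⟩, le_antisymm hupper (hlower _)⟩, Set.forall_mem_range.2 hlower⟩
end
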